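/- For every integer d ≥ 2 there exists a constant C > 0, depending only on d, such that for all c ∈ ℝ^d, all r with 0 < r ≤ √d, and every natural number L, one has Σ_{l=0}^{L} #{j ∈ {0,…,2^l−1}^d : the level-l dyadic cube ∏_{i=1}^d [j_i·2^{-l}, (j_i+1)·2^{-l}] intersects the sphere {x ∈ ℝ^d : ‖x − c‖ = r}} ≤ C · 2^{(d−1)L}. -/

import Mathlib

/-- The level-`l` dyadic cube of `[0,1]^d` with multi-index `j`:
`∏ᵢ [jᵢ·2^{-l}, (jᵢ+1)·2^{-l}]`. -/
def dyadicCube (d l : ℕ) (j : Fin d → ℕ) : Set (EuclideanSpace ℝ (Fin d)) :=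
  {x | ∀ i, (j i : ℝ) / 2 ^ l ≤ x i ∧ x i ≤ ((j i : ℝ) + 1) / 2 ^ l}

/-!
A level-`l` cube has diameter `δ = √d · 2^{-l}`, so every cube meeting the sphere `‖x - c‖ = r`
lies in the annulus `r - δ ≤ ‖x - c‖ ≤ r + δ`. The interiors of these cubes are pairwise disjoint
and have volume `2^{-ld}`, while the annulus has volume at most `d (r + δ)^{d-1} · 2δ · |B₁|`.
With `r + δ ≤ 2√d` this bounds the number of cubes at level `l` by `C · 2^{(d-1) l}`, and for
`d ≥ 2` the sum of these bounds over `l ≤ L` is a geometric series dominated by twice its last term.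
-/

open MeasureTheory Metric Set Module
open scoped ENNReal

lemma pow_sub_pow_le_mul_sub {x y : ℝ} (hy : 0 ≤ y) (hyx : y ≤ x) (n : ℕ) :
    x ^ n - y ^ n ≤ n * x ^ (n - 1) * (x - y) := by
  have hx : 0 ≤ x := hy.trans hyx
  rw [← geom_sum₂_mul]
  refine mul_le_mul_of_nonneg_right ?_ (sub_nonneg.2 hyx)
  calc ∑ i ∈ Finset.range n, x ^ i * y ^ (n - 1 - i)
      ≤ ∑ i ∈ Finset.range n, x ^ i * x ^ (n - 1 - i) := by gcongr
    _ = ∑ _i ∈ Finset.range n, x ^ (n - 1) := Finset.sum_congr rfl fun i hi => by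
      rw [← pow_add, Nat.add_sub_cancel' (Nat.le_sub_one_of_lt (Finset.mem_range.1 hi))]
    _ = n * x ^ (n - 1) := by simp

lemma addHaar_closedBall_sdiff_ball_le {E : Type*} [NormedAddCommGroup E] [NormedSpace ℝ E]
    [MeasurableSpace E] [BorelSpace E] [FiniteDimensional ℝ E] [Nontrivial E]
    (μ : Measure E) [μ.IsAddHaarMeasure] (c : E) {a b : ℝ} (ha : 0 ≤ a) (hba : b ≤ a) :
    μ (closedBall c a \ ball c b) ≤
      ENNReal.ofReal (finrank ℝ E * a ^ (finrank ℝ E - 1) * (a - b)) * μ (ball 0 1) := by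
  have hball : ball c b = ball c (max b 0) := by
    rcases le_total b 0 with hb | hb
    · rw [ball_eq_empty.2 hb, max_eq_right hb, ball_eq_empty.2 le_rfl]
    · rw [max_eq_left hb]
  have hm : 0 ≤ max b 0 := le_max_right _ _
  rw [hball, measure_sdiff (ball_subset_closedBall.trans (closedBall_subset_closedBall
      (max_le hba ha))) measurableSet_ball.nullMeasurableSet measure_ball_lt_top.ne,
    Measure.addHaar_closedBall μ c ha, Measure.addHaar_ball μ c hm,
    ← ENNReal.sub_mul fun _ _ => measure_ball_lt_top.ne, ← ENNReal.ofReal_sub _ (by positivity)]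
  gcongr
  calc a ^ finrank ℝ E - max b 0 ^ finrank ℝ E
      ≤ finrank ℝ E * a ^ (finrank ℝ E - 1) * (a - max b 0) :=
        pow_sub_pow_le_mul_sub hm (max_le hba ha) _
    _ ≤ finrank ℝ E * a ^ (finrank ℝ E - 1) * (a - b) := by gcongr; exact le_max_left _ _

lemma subset_closedBall_sdiff_ball_of_dist_le {α : Type*} [PseudoMetricSpace α] {s : Set α}
    {c x : α} {r δ : ℝ} (hxr : x ∈ sphere c r) (hs : ∀ y ∈ s, dist y x ≤ δ) :
    s ⊆ closedBall c (r + δ) \ ball c (r - δ) := by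
  intro y hy
  have hyx := hs y hy
  have h1 := dist_triangle y x c
  have h2 := dist_triangle x y c
  rw [mem_sphere] at hxr
  rw [dist_comm x y] at h2
  simp only [mem_sdiff, mem_closedBall, mem_ball, not_lt]
  constructor <;> linarith

lemma card_mul_le_measure_of_pairwiseDisjoint {α ι : Type*} [MeasurableSpace α] {μ : Measure α}
    {S : Finset ι} {U : ι → Set α} {A : Set α} {v : ℝ≥0∞}
    (hdisj : (S : Set ι).PairwiseDisjoint U) (hmeas : ∀ j ∈ S, MeasurableSet (U j))
    (hvol : ∀ j ∈ S, μ (U j) = v) (hsub : ∀ j ∈ S, U j ⊆ A) :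
    S.card * v ≤ μ A :=
  calc S.card * v = ∑ j ∈ S, μ (U j) := by
        rw [Finset.sum_congr rfl hvol, Finset.sum_const, nsmul_eq_mul]
    _ = μ (⋃ j ∈ S, U j) := (measure_biUnion_finset hdisj hmeas).symm
    _ ≤ μ A := measure_mono (iUnion₂_subset hsub)

lemma sum_range_succ_pow_le_two_mul_pow {x : ℝ} (hx : 2 ≤ x) (L : ℕ) :
    ∑ l ∈ Finset.range (L + 1), x ^ l ≤ 2 * x ^ L := by
  induction L with
  | zero => simp
  | succ L ih =>
    rw [Finset.sum_range_succ, pow_succ x L]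
    nlinarith [pow_nonneg (zero_le_two.trans hx) L]

section DyadicCube

variable {d l : ℕ}

/-- Closed dyadic cubes of the same level overlap along their faces; their interiors do not. -/
def openDyadicCube (d l : ℕ) (j : Fin d → ℕ) : Set (EuclideanSpace ℝ (Fin d)) :=
  WithLp.ofLp ⁻¹' univ.pi fun i => Ioo ((j i : ℝ) / 2 ^ l) (((j i : ℝ) + 1) / 2 ^ l)

lemma openDyadicCube_subset_dyadicCube (j : Fin d → ℕ) :
    openDyadicCube d l j ⊆ dyadicCube d l j :=
  fun _ hx i => Ioo_subset_Icc_self (hx i trivial)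

lemma measurableSet_openDyadicCube (j : Fin d → ℕ) : MeasurableSet (openDyadicCube d l j) :=
  (PiLp.volume_preserving_ofLp (Fin d)).measurable
    (MeasurableSet.univ_pi fun _ => measurableSet_Ioo)

lemma volume_openDyadicCube (j : Fin d → ℕ) :
    volume (openDyadicCube d l j) = ENNReal.ofReal (((2 : ℝ) ^ l)⁻¹ ^ d) := by
  rw [openDyadicCube, (PiLp.volume_preserving_ofLp (Fin d)).measure_preimage
    (MeasurableSet.univ_pi fun _ => measurableSet_Ioo).nullMeasurableSet, Real.volume_pi_Ioo,
    ENNReal.ofReal_pow (by positivity), ENNReal.ofReal_inv_of_pos (by positivity)]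
  simp [add_div]

lemma disjoint_openDyadicCube {j j' : Fin d → ℕ} (h : j ≠ j') :
    Disjoint (openDyadicCube d l j) (openDyadicCube d l j') := by
  refine disjoint_left.2 fun x hx hx' => h (funext fun i => ?_)
  obtain ⟨h1, h2⟩ := hx i trivial
  obtain ⟨h3, h4⟩ := hx' i trivial
  have h5 : (j i : ℝ) < j' i + 1 := (div_lt_div_iff_of_pos_right (by positivity)).1 (h1.trans h4)
  have h6 : (j' i : ℝ) < j i + 1 := (div_lt_div_iff_of_pos_right (by positivity)).1 (h3.trans h2)
  norm_cast at h5 h6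
  omega

lemma dist_le_of_mem_dyadicCube {j : Fin d → ℕ} {x y : EuclideanSpace ℝ (Fin d)}
    (hx : x ∈ dyadicCube d l j) (hy : y ∈ dyadicCube d l j) :
    dist x y ≤ √d / 2 ^ l := by
  have hcoord : ∀ i, dist (x i) (y i) ≤ (2 ^ l)⁻¹ := fun i => by
    simpa [add_div] using Real.dist_le_of_mem_Icc (hx i) (hy i)
  calc dist x y = √(∑ i, dist (x i) (y i) ^ 2) := EuclideanSpace.dist_eq x y
    _ ≤ √(∑ _i : Fin d, ((2 : ℝ) ^ l)⁻¹ ^ 2) := by gcongr with i; exact hcoord i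
    _ = √d / 2 ^ l := by simp [Real.sqrt_mul, div_eq_mul_inv]

lemma ncard_dyadicCube_inter_sphere_mul_le (hd : 0 < d) (c : EuclideanSpace ℝ (Fin d))
    {r : ℝ} (hr : 0 ≤ r) (l : ℕ) :
    ({j : Fin d → Fin (2 ^ l) |
        (dyadicCube d l (fun i => (j i : ℕ)) ∩ sphere c r).Nonempty}.ncard : ℝ) *
        ((2 : ℝ) ^ l)⁻¹ ^ d ≤
      d * (r + √d / 2 ^ l) ^ (d - 1) * (2 * (√d / 2 ^ l)) *
        (volume (ball (0 : EuclideanSpace ℝ (Fin d)) 1)).toReal := by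
  classical
  have : Nonempty (Fin d) := ⟨⟨0, hd⟩⟩
  set δ : ℝ := √d / 2 ^ l
  set S := {j : Fin d → Fin (2 ^ l) |
    (dyadicCube d l (fun i => (j i : ℕ)) ∩ sphere c r).Nonempty}.toFinset
  have hsub : ∀ j ∈ S, openDyadicCube d l (fun i => (j i : ℕ)) ⊆
      closedBall c (r + δ) \ ball c (r - δ) := fun j hj => by
    obtain ⟨x, hxQ, hxr⟩ := (mem_toFinset.1 hj : _)
    exact (openDyadicCube_subset_dyadicCube _).trans <|
      subset_closedBall_sdiff_ball_of_dist_le hxr fun y hy => dist_le_of_mem_dyadicCube hy hxQ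
  have hdisj : (S : Set (Fin d → Fin (2 ^ l))).PairwiseDisjoint
      fun j => openDyadicCube d l (fun i => (j i : ℕ)) := fun j _ j' _ h =>
    disjoint_openDyadicCube fun h' => h (funext fun i => Fin.ext (congrFun h' i))
  have hannulus := addHaar_closedBall_sdiff_ball_le volume c (by positivity : 0 ≤ r + δ)
    (by linarith [show 0 ≤ δ by positivity] : r - δ ≤ r + δ)
  rw [finrank_euclideanSpace_fin, show r + δ - (r - δ) = 2 * δ by ring] at hannulus
  have hcount := (card_mul_le_measure_of_pairwiseDisjoint hdisj
    (fun _ _ => measurableSet_openDyadicCube _) (fun _ _ => volume_openDyadicCube _)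
    hsub).trans hannulus
  rw [Set.ncard_eq_toFinset_card']
  have := ENNReal.toReal_mono (by finiteness) hcount
  rwa [ENNReal.toReal_mul, ENNReal.toReal_mul, ENNReal.toReal_ofReal (by positivity),
    ENNReal.toReal_ofReal (by positivity), ENNReal.toReal_natCast] at this

lemma ncard_dyadicCube_inter_sphere_le (hd : 0 < d) (c : EuclideanSpace ℝ (Fin d))
    {r : ℝ} (hr : 0 ≤ r) (hrd : r ≤ √d) (l : ℕ) :
    ({j : Fin d → Fin (2 ^ l) |
        (dyadicCube d l (fun i => (j i : ℕ)) ∩ sphere c r).Nonempty}.ncard : ℝ) ≤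
      (volume (ball (0 : EuclideanSpace ℝ (Fin d)) 1)).toReal * (d * (2 * √d) ^ d) *
        2 ^ ((d - 1) * l) := by
  set ω := (volume (ball (0 : EuclideanSpace ℝ (Fin d)) 1)).toReal
  have hδ : √d / 2 ^ l ≤ √d := div_le_self (Real.sqrt_nonneg _) (one_le_pow₀ one_le_two)
  have hbound := calc
    _ ≤ d * (r + √d / 2 ^ l) ^ (d - 1) * (2 * (√d / 2 ^ l)) * ω :=
      ncard_dyadicCube_inter_sphere_mul_le hd c hr l
    _ ≤ d * (2 * √d) ^ (d - 1) * (2 * (√d / 2 ^ l)) * ω := by gcongr; linarith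
    _ = ω * (d * (2 * √d) ^ d) * (2 ^ l)⁻¹ := by rw [← pow_sub_one_mul hd.ne']; ring
  have hscale : (2 : ℝ) ^ ((d - 1) * l) * ((2 : ℝ) ^ l)⁻¹ ^ d = (2 ^ l)⁻¹ := by
    rw [pow_mul', ← pow_sub_one_mul hd.ne' ((2 : ℝ) ^ l)⁻¹, ← mul_assoc, ← mul_pow,
      mul_inv_cancel₀ (by positivity), one_pow, one_mul]
  refine le_of_mul_le_mul_right ?_ (by positivity : (0 : ℝ) < ((2 : ℝ) ^ l)⁻¹ ^ d)
  rwa [mul_assoc, hscale]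

end DyadicCube

theorem stmt_13 (d : ℕ) (hd : 2 ≤ d) :
    ∃ C : ℝ, 0 < C ∧
      ∀ (c : EuclideanSpace ℝ (Fin d)) (r : ℝ), 0 < r → r ≤ Real.sqrt d →
        ∀ L : ℕ,
          ((∑ l ∈ Finset.range (L + 1),
              {j : Fin d → Fin (2 ^ l) |
                (dyadicCube d l (fun i => (j i : ℕ)) ∩ Metric.sphere c r).Nonempty}.ncard : ℕ) : ℝ) ≤
            C * 2 ^ ((d - 1) * L) := by
  set K := (volume (ball (0 : EuclideanSpace ℝ (Fin d)) 1)).toReal * (d * (2 * √d) ^ d)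
  have hK : 0 < K := by
    have : 0 < (volume (ball (0 : EuclideanSpace ℝ (Fin d)) 1)).toReal :=
      ENNReal.toReal_pos (measure_ball_pos volume 0 one_pos).ne' measure_ball_lt_top.ne
    positivity
  have hq : (2 : ℝ) ≤ 2 ^ (d - 1) := le_self_pow₀ one_le_two (by omega)
  refine ⟨2 * K, by positivity, fun c r hr hrd L => ?_⟩
  push_cast
  calc ∑ l ∈ Finset.range (L + 1), ({j : Fin d → Fin (2 ^ l) |
        (dyadicCube d l (fun i => (j i : ℕ)) ∩ sphere c r).Nonempty}.ncard : ℝ)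
      ≤ ∑ l ∈ Finset.range (L + 1), K * (2 ^ (d - 1)) ^ l := by
        gcongr with l
        rw [← pow_mul]
        exact ncard_dyadicCube_inter_sphere_le (by omega) c hr.le hrd l
    _ = K * ∑ l ∈ Finset.range (L + 1), ((2 : ℝ) ^ (d - 1)) ^ l := (Finset.mul_sum ..).symm
    _ ≤ K * (2 * (2 ^ (d - 1)) ^ L) := by gcongr; exact sum_range_succ_pow_le_two_mul_pow hq L
    _ = 2 * K * 2 ^ ((d - 1) * L) := by rw [← pow_mul]; ring
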